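/- Suppose B < 2(1 − p − s)²/((p + s)(2 − p − s)) and η satisfies s/p ≤ η < (p + s)/(Bp) + s/p. Then no Ψ in the interval [p + s, (p − s)B] is a high-benefit equilibrium; that is, there is no Ψ ∈ [p + s, (p − s)B] with either (Ψ ≥ Ψ₁ and Ψ·A₁(Ψ) = (ηp − s)·R(Ψ)) or (Ψ < Ψ₁ and Ψ = (ηp − s)·B). -/
import Mathlib


/-- Requesters' share. -/
noncomputable def R (p s Ψ : ℝ) : ℝ := (1 - Ψ) * (1 - p - s)

/-- Agents' share in the high-benefit regime. -/
noncomputable def A₁ (p s Ψ : ℝ) : ℝ := ((2 * Ψ - p - s) * (p + s)) / 2 + Ψ * (1 - p - s)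

/-- Threshold Ψ₁. -/
noncomputable def Ψ₁ (p s B : ℝ) : ℝ := (1 - p - s + (B / 2) * (p + s) ^ 2) / (1 - p - s + B)

theorem stmt_6 (p s B η : ℝ) (hs : 0 < s) (hsp : s < p) (hps : p + s < 1) (hB : 0 < B)
    (hη₀ : s / p ≤ η) (hη₁ : η ≤ 1)
    (hBlt : B < 2 * (1 - p - s) ^ 2 / ((p + s) * (2 - p - s)))
    (hηhi : η < (p + s) / (B * p) + s / p) :
    ¬ ∃ Ψ ∈ Set.Icc (p + s) ((p - s) * B),
        (Ψ₁ p s B ≤ Ψ ∧ Ψ * A₁ p s Ψ = (η * p - s) * R p s Ψ) ∨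
        (Ψ < Ψ₁ p s B ∧ Ψ = (η * p - s) * B) := by
  have hp : 0 < p := hs.trans hsp
  have ht : 0 < 1 - p - s := by linarith
  have hq : 0 < p + s := by linarith
  have key : (η * p - s) * B < p + s := by
    have h2 : (p + s) / (B * p) + s / p = (p + s + s * B) / (B * p) := by
      field_simp
    rw [h2, lt_div_iff₀ (by positivity)] at hηhi
    nlinarith [hηhi]
  rw [lt_div_iff₀ (by nlinarith : (0:ℝ) < (p + s) * (2 - p - s))] at hBlt
  rintro ⟨Ψ, ⟨hlo, hhi⟩, h⟩
  rcases h with ⟨h₁, heq⟩ | ⟨_, heq⟩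
  · -- case 1
    have hΨ1 : Ψ < 1 := by
      nlinarith [mul_le_mul_of_nonneg_right hhi (by linarith : (0:ℝ) ≤ 2 - p - s),
        mul_pos (mul_pos hs hB) (by linarith : (0:ℝ) < 2 - p - s),
        mul_pos hq (by linarith : (0:ℝ) < 2 * (1 - p - s) + 1)]
    have h₁' : 1 - p - s + (B / 2) * (p + s) ^ 2 ≤ Ψ * (1 - p - s + B) := by
      rw [Ψ₁, div_le_iff₀ (by linarith)] at h₁
      linarith
    have H1 : (1 - p - s) * (1 - Ψ) ≤ B * (Ψ - (p + s) ^ 2 / 2) := by nlinarith [h₁']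
    have hΨpos : 0 < Ψ := lt_of_lt_of_le hq hlo
    have hfac : 0 < (1 - p - s) * (1 - Ψ) := by
      apply mul_pos ht; linarith
    have H2 : Ψ * ((1 - p - s) * (1 - Ψ)) ≤ Ψ * (B * (Ψ - (p + s) ^ 2 / 2)) :=
      mul_le_mul_of_nonneg_left H1 hΨpos.le
    have H3 : (p + s) * ((1 - p - s) * (1 - Ψ)) ≤ Ψ * ((1 - p - s) * (1 - Ψ)) :=
      mul_le_mul_of_nonneg_right hlo hfac.le
    have H4 : ((η * p - s) * B) * ((1 - p - s) * (1 - Ψ)) < (p + s) * ((1 - p - s) * (1 - Ψ)) :=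
      mul_lt_mul_of_pos_right key hfac
    have Hchain : ((η * p - s) * ((1 - p - s) * (1 - Ψ))) * B < (Ψ * (Ψ - (p + s) ^ 2 / 2)) * B := by
      calc ((η * p - s) * ((1 - p - s) * (1 - Ψ))) * B
          = ((η * p - s) * B) * ((1 - p - s) * (1 - Ψ)) := by ring
        _ < (p + s) * ((1 - p - s) * (1 - Ψ)) := H4
        _ ≤ Ψ * ((1 - p - s) * (1 - Ψ)) := H3
        _ ≤ Ψ * (B * (Ψ - (p + s) ^ 2 / 2)) := H2
        _ = (Ψ * (Ψ - (p + s) ^ 2 / 2)) * B := by ring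
    have Hlt : (η * p - s) * ((1 - p - s) * (1 - Ψ)) < Ψ * (Ψ - (p + s) ^ 2 / 2) :=
      lt_of_mul_lt_mul_right Hchain hB.le
    have heq' : (η * p - s) * ((1 - p - s) * (1 - Ψ)) = Ψ * (Ψ - (p + s) ^ 2 / 2) := by
      unfold A₁ R at heq
      linear_combination -heq
    linarith [Hlt, heq'.ge]
  · -- case 2
    linarith
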